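/- Suppose a finite graph G satisfies the conical curvature-dimension condition CCD(K, N), meaning Γ₂ᶜ(f)(p) ≥ (Δᶜf)²(p)/N + K Γ₁ᶜ(f)(p) for all functions f on the cone C(G). Then for every function f on G: Σ_{y ∈ V} Γ₁(f)(y) ≥ ((2 - N)/(2N)) (Σ_{y ∈ V} f(y))² + ((2K + |V| - 3)/4) Σ_{y ∈ V} f(y)². -/

import Mathlib

open Finset

variable {V : Type*}

noncomputable def lap (G : SimpleGraph V) [∀ v, Fintype (G.neighborSet v)] (f : V → ℝ) (x : V) : ℝ :=
  ∑ y ∈ G.neighborFinset x, (f y - f x)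

noncomputable def gam (G : SimpleGraph V) [∀ v, Fintype (G.neighborSet v)] (f g : V → ℝ) (x : V) : ℝ :=
  (1/2) * ∑ y ∈ G.neighborFinset x, (f y - f x) * (g y - g x)

noncomputable def gam1 (G : SimpleGraph V) [∀ v, Fintype (G.neighborSet v)] (f : V → ℝ) (x : V) : ℝ :=
  (1/2) * ∑ y ∈ G.neighborFinset x, (f y - f x)^2

noncomputable def gam2 (G : SimpleGraph V) [∀ v, Fintype (G.neighborSet v)] (f : V → ℝ) (x : V) : ℝ :=
  (1/2) * (lap G (gam1 G f) x - 2 * gam G f (lap G f) x)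

def cone (G : SimpleGraph V) : SimpleGraph (Option V) where
  Adj a b := a ≠ b ∧ ∀ x ∈ a, ∀ y ∈ b, G.Adj x y
  symm := ⟨fun _ _ h => ⟨h.1.symm, fun x hx y hy => (h.2 y hy x hx).symm⟩⟩
  loopless := ⟨fun _ h => h.1 rfl⟩

instance (G : SimpleGraph V) [DecidableEq V] [DecidableRel G.Adj] :
    DecidableRel (cone G).Adj := fun a b =>
  inferInstanceAs (Decidable (a ≠ b ∧ ∀ x ∈ a, ∀ y ∈ b, G.Adj x y))

/-! At the apex, the cone Laplacian, `Γ₁` and `Γ₂` of the extension of `f` by `0` are explicit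
in `∑ f`, `∑ f²` and `∑ Γ₁(f)`; the only non-local term, `∑ f · Δf`, is `-∑ Γ₁(f)` by Green's
formula on `G`. Substituting these into `CCD(K, N)` gives the inequality. -/

section Green

variable (G : SimpleGraph V) [Fintype V] [DecidableRel G.Adj]

lemma sum_sum_neighborFinset_comm (g : V → V → ℝ) :
    ∑ x, ∑ y ∈ G.neighborFinset x, g x y = ∑ x, ∑ y ∈ G.neighborFinset x, g y x := by
  simp_rw [SimpleGraph.neighborFinset_eq_filter, sum_filter]
  rw [sum_comm]
  simp_rw [G.adj_comm]

lemma sum_mul_lap (f : V → ℝ) : ∑ x, f x * lap G f x = -∑ x, gam1 G f x := by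
  have hswap := sum_sum_neighborFinset_comm G fun x y => f x * (f y - f x)
  have hsq : ∑ x, f x * lap G f x + ∑ x, f x * lap G f x = -2 * ∑ x, gam1 G f x := by
    simp only [lap, gam1, mul_sum]
    nth_rewrite 2 [hswap]
    rw [← sum_add_distrib]
    refine sum_congr rfl fun x _ => ?_
    rw [← sum_add_distrib]
    exact sum_congr rfl fun y _ => by ring
  linarith

end Green

section Cone

@[simp]
lemma cone_adj (G : SimpleGraph V) {a b : Option V} :
    (cone G).Adj a b ↔ a ≠ b ∧ ∀ x ∈ a, ∀ y ∈ b, G.Adj x y :=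
  Iff.rfl

variable (G : SimpleGraph V) [Fintype V] [DecidableEq V] [DecidableRel G.Adj]

lemma cone_neighborFinset_none : (cone G).neighborFinset none = univ.map .some := by
  ext (_ | y) <;> simp

lemma cone_neighborFinset_some (x : V) :
    (cone G).neighborFinset (some x) = cons none ((G.neighborFinset x).map .some) (by simp) := by
  ext (_ | y)
  · simp
  · simpa using fun h => h.ne

lemma sum_cone_neighborFinset_none (g : Option V → ℝ) :
    ∑ y ∈ (cone G).neighborFinset none, g y = ∑ y, g (some y) := by
  rw [cone_neighborFinset_none, sum_map]
  rfl

lemma sum_cone_neighborFinset_some (x : V) (g : Option V → ℝ) :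
    ∑ y ∈ (cone G).neighborFinset (some x), g y
      = g none + ∑ y ∈ G.neighborFinset x, g (some y) := by
  rw [cone_neighborFinset_some, sum_cons, sum_map]
  rfl

def extendByZero (f : V → ℝ) : Option V → ℝ := fun o => o.elim 0 f

variable (f : V → ℝ)

lemma lap_cone_none : lap (cone G) (extendByZero f) none = ∑ y, f y := by
  simp [lap, sum_cone_neighborFinset_none, extendByZero]

lemma gam1_cone_none : gam1 (cone G) (extendByZero f) none = 1 / 2 * ∑ y, f y ^ 2 := by
  simp [gam1, sum_cone_neighborFinset_none, extendByZero]

lemma lap_cone_some (x : V) : lap (cone G) (extendByZero f) (some x) = lap G f x - f x := by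
  simp only [lap, sum_cone_neighborFinset_some, extendByZero, Option.elim_none, Option.elim_some]
  ring

lemma gam1_cone_some (x : V) :
    gam1 (cone G) (extendByZero f) (some x) = gam1 G f x + 1 / 2 * f x ^ 2 := by
  simp only [gam1, sum_cone_neighborFinset_some, extendByZero, Option.elim_none, Option.elim_some]
  ring

lemma lap_gam1_cone_none :
    lap (cone G) (gam1 (cone G) (extendByZero f)) none
      = ∑ y, gam1 G f y + 1 / 2 * ∑ y, f y ^ 2 - Fintype.card V / 2 * ∑ y, f y ^ 2 := by
  rw [lap, sum_cone_neighborFinset_none]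
  simp only [gam1_cone_some, gam1_cone_none, sum_sub_distrib, sum_add_distrib, sum_const,
    card_univ, nsmul_eq_mul, ← mul_sum]
  ring

lemma gam_lap_cone_none :
    gam (cone G) (extendByZero f) (lap (cone G) (extendByZero f)) none
      = -1 / 2 * (∑ y, gam1 G f y + ∑ y, f y ^ 2 + (∑ y, f y) ^ 2) := by
  have hterm : ∀ y, (extendByZero f (some y) - extendByZero f none)
      * (lap (cone G) (extendByZero f) (some y) - lap (cone G) (extendByZero f) none)
      = f y * lap G f y - f y ^ 2 - (∑ z, f z) * f y := fun y => by
    rw [lap_cone_some, lap_cone_none]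
    simp only [extendByZero, Option.elim_none, Option.elim_some]
    ring
  simp only [gam, sum_cone_neighborFinset_none, hterm, sum_sub_distrib, ← mul_sum, sum_mul_lap]
  ring

lemma gam2_cone_none :
    gam2 (cone G) (extendByZero f) none
      = ∑ y, gam1 G f y - (Fintype.card V - 3) / 4 * ∑ y, f y ^ 2 + 1 / 2 * (∑ y, f y) ^ 2 := by
  rw [gam2, lap_gam1_cone_none, gam_lap_cone_none]
  ring

end Cone

theorem stmt9_general (G : SimpleGraph V) [Fintype V] [DecidableEq V] [DecidableRel G.Adj]
    (K N : ℝ) (hN : 1 < N)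
    (hCCD : ∀ f : Option V → ℝ,
      gam2 (cone G) f none ≥ (lap (cone G) f none)^2 / N + K * gam1 (cone G) f none) :
    ∀ f : V → ℝ,
      ∑ y : V, gam1 G f y
        ≥ (2 - N) / (2 * N) * (∑ y : V, f y)^2
          + (2 * K + (Fintype.card V : ℝ) - 3) / 4 * ∑ y : V, (f y)^2 := by
  intro f
  have hCCDf := hCCD (extendByZero f)
  rw [gam2_cone_none, lap_cone_none, gam1_cone_none] at hCCDf
  have hN0 : N ≠ 0 := (zero_lt_one.trans hN).ne'
  have hsplit : (2 - N) / (2 * N) * (∑ y, f y) ^ 2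
      = (∑ y, f y) ^ 2 / N - 1 / 2 * (∑ y, f y) ^ 2 := by
    field_simp
  rw [ge_iff_le, hsplit]
  linarith

theorem stmt9 (G : SimpleGraph V) [Fintype V] [DecidableEq V] [DecidableRel G.Adj]
    (hG : G.Connected) (K N : ℝ) (hN : 1 < N)
    (hCCD : ∀ f : Option V → ℝ,
      gam2 (cone G) f none ≥ (lap (cone G) f none)^2 / N + K * gam1 (cone G) f none) :
    ∀ f : V → ℝ,
      ∑ y : V, gam1 G f y
        ≥ (2 - N) / (2 * N) * (∑ y : V, f y)^2
          + (2 * K + (Fintype.card V : ℝ) - 3) / 4 * ∑ y : V, (f y)^2 :=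
  stmt9_general G K N hN hCCD
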